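/- arXiv:2402.17965 — 9 statements merged into one kernel-verified Lean document; each statement's English description precedes it below -/
import Mathlib

section
/- Let h be a diagonal symmetry of W. On the exterior algebra Λ := ⋀_S(Sⁿ) of the free S-module Sⁿ with standard basis e₁,…,eₙ, consider the S-linear operator d_h := ∑_{i=1}^n ( (yᵢ − hᵢxᵢ)·(left exterior multiplication by eᵢ) + ∇_iW(h·x,y)·(left interior product/contraction with the i-th dual basis vector) ). Then d_h ∘ d_h equals scalar multiplication by W(y₁,…,yₙ) − W(x₁,…,xₙ) on Λ. (In other words, (S⟨θ₁,…,θₙ⟩, ∑ᵢ (yᵢ−hᵢxᵢ)θᵢ + ∇ᵢW(h·x,y)∂ᵢ) is a matrix factorization Δ_h of W⊟W := W(y) − W(x).) -/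
noncomputable section
open MvPolynomial
open scoped Classical

variable {k : Type} [Field k] {n : ℕ}

/-- The `x`-variables of `S = k[x₁,…,xₙ,y₁,…,yₙ]` (the ring `MvPolynomial (Fin n ⊕ Fin n) k`,
where `Sum.inl i` is `xᵢ` and `Sum.inr i` is `yᵢ`). -/
def Xv (i : Fin n) : MvPolynomial (Fin n ⊕ Fin n) k := X (Sum.inl i)

/-- The `y`-variables of `S`. -/
def Yv (i : Fin n) : MvPolynomial (Fin n ⊕ Fin n) k := X (Sum.inr i)

/-- `W̄^h_{j,i} = W(y₁,…,y_j, x_{j+1},…,x_i, h_{i+1}x_{i+1},…,hₙxₙ) ∈ S`,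
with `j i : ℕ` running from `0` to `n` (1-based indexing of the variables). -/
def Wbar (h : Fin n → kˣ) (W : MvPolynomial (Fin n) k) (j i : ℕ) :
    MvPolynomial (Fin n ⊕ Fin n) k :=
  aeval (fun t : Fin n =>
    if (t : ℕ) < j then Yv t else if (t : ℕ) < i then Xv t else (h t : k) • Xv t) W

/-- `xᵢ^h := xᵢ` if `hᵢ = 1`, and `0` otherwise. -/
def xh (h : Fin n → kˣ) (t : Fin n) : MvPolynomial (Fin n) k :=
  if h t = 1 then X t else 0

/-- `W̃^h_{j,i} = W(x₁^h,…,x_j^h, x_{j+1},…,x_i, h_{i+1}x_{i+1},…,hₙxₙ) ∈ R`. -/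
def Wtil (h : Fin n → kˣ) (W : MvPolynomial (Fin n) k) (j i : ℕ) :
    MvPolynomial (Fin n) k :=
  aeval (fun t : Fin n =>
    if (t : ℕ) < j then xh h t else if (t : ℕ) < i then X t else (h t : k) • X t) W

/-- The substitution `xᵢ ↦ hᵢxᵢ`, `yᵢ ↦ yᵢ` on `S`. -/
def substH (h : Fin n → kˣ) :
    MvPolynomial (Fin n ⊕ Fin n) k →ₐ[k] MvPolynomial (Fin n ⊕ Fin n) k :=
  aeval (Sum.elim (fun i => (h i : k) • Xv i) Yv)

/-- The inclusion `R = k[x] → S = k[x,y]`. -/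
def toS : MvPolynomial (Fin n) k →ₐ[k] MvPolynomial (Fin n ⊕ Fin n) k :=
  aeval Xv

/-- `h` is a diagonal symmetry of `W`: `W(h₁x₁,…,hₙxₙ) = W`. -/
def IsDiagSym (h : Fin n → kˣ) (W : MvPolynomial (Fin n) k) : Prop :=
  aeval (fun t : Fin n => (h t : k) • X t) W = W

/-- `nab j` is the difference quotient `∇_jW`, characterized by
`(y_j−x_j)·∇_jW = W(y₁,…,y_j,x_{j+1},…,xₙ) − W(y₁,…,y_{j−1},x_j,…,xₙ)`. -/
def IsNabla (W : MvPolynomial (Fin n) k)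
    (nab : Fin n → MvPolynomial (Fin n ⊕ Fin n) k) : Prop :=
  ∀ j : Fin n, (Yv j - Xv j) * nab j =
    aeval (fun t : Fin n => if t ≤ j then Yv t else Xv t) W -
    aeval (fun t : Fin n => if t < j then Yv t else Xv t) W

/-- The family `(g_{ji})_{1≤j≤i≤n}` in `S` is adapted to `(W,h)`. -/
def GAdapted (h : Fin n → kˣ) (W : MvPolynomial (Fin n) k)
    (g : Fin n → Fin n → MvPolynomial (Fin n ⊕ Fin n) k) : Prop :=
  (∀ j i : Fin n, j < i → h i ≠ 1 →
    (Yv j - Xv j) * (Xv i - (h i : k) • Xv i) * g j i =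
      (Wbar h W ((j : ℕ)+1) ((i : ℕ)+1) - Wbar h W (j : ℕ) ((i : ℕ)+1)) -
      (Wbar h W ((j : ℕ)+1) (i : ℕ) - Wbar h W (j : ℕ) (i : ℕ))) ∧
  (∀ j i : Fin n, j < i → h i = 1 →
    (Yv j - Xv j) * g j i =
      pderiv (Sum.inl i) (Wbar h W ((j : ℕ)+1) ((i : ℕ)+1)) -
      pderiv (Sum.inl i) (Wbar h W (j : ℕ) ((i : ℕ)+1))) ∧
  (∀ i : Fin n, h i ≠ 1 →
    (Yv i - Xv i) * (Yv i - (h i : k) • Xv i) * (Xv i - (h i : k) • Xv i) * g i i =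
      (Xv i - (h i : k) • Xv i) * (Wbar h W ((i : ℕ)+1) ((i : ℕ)+1) - Wbar h W (i : ℕ) (i : ℕ)) -
      (Yv i - (h i : k) • Xv i) * (Wbar h W (i : ℕ) ((i : ℕ)+1) - Wbar h W (i : ℕ) (i : ℕ))) ∧
  (∀ i : Fin n, h i = 1 →
    (Yv i - Xv i)^2 * g i i =
      (Wbar h W ((i : ℕ)+1) ((i : ℕ)+1) - Wbar h W (i : ℕ) (i : ℕ)) -
      (Yv i - Xv i) * pderiv (Sum.inl i) (Wbar h W (i : ℕ) ((i : ℕ)+1)))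

/-- The family `(f_{ji})_{1≤j<i≤n}` in `R` is adapted to `(W,h)`. -/
def FAdapted (h : Fin n → kˣ) (W : MvPolynomial (Fin n) k)
    (f : Fin n → Fin n → MvPolynomial (Fin n) k) : Prop :=
  (∀ j i : Fin n, j < i → h j ≠ 1 → h i ≠ 1 →
    (X j - (h j : k) • X j) * (X i - (h i : k) • X i) * f j i =
      (Wtil h W ((j : ℕ)+1) ((i : ℕ)+1) - Wtil h W (j : ℕ) ((i : ℕ)+1)) -
      (Wtil h W ((j : ℕ)+1) (i : ℕ) - Wtil h W (j : ℕ) (i : ℕ))) ∧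
  (∀ j i : Fin n, j < i → h j ≠ 1 → h i = 1 →
    (X j - (h j : k) • X j) * f j i =
      pderiv i (Wtil h W ((j : ℕ)+1) ((i : ℕ)+1)) - pderiv i (Wtil h W (j : ℕ) ((i : ℕ)+1))) ∧
  (∀ j i : Fin n, j < i → h j = 1 → h i ≠ 1 →
    (X i - (h i : k) • X i) * f j i =
      (pderiv j (Wtil h W ((j : ℕ)+1) ((i : ℕ)+1)) - pderiv j (Wtil h W ((j : ℕ)+1) (i : ℕ))) -
      (pderiv j (Wtil h W (i : ℕ) (i : ℕ)) - pderiv j (Wtil h W ((i : ℕ)+1) ((i : ℕ)+1)))) ∧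
  (∀ j i : Fin n, j < i → h j = 1 → h i = 1 → f j i = 0)

/- STATEMENT 2: on the exterior algebra `Λ = ⋀_S(Sⁿ)` (with `Sⁿ = Fin n → S` and
standard basis `eᵢ = ι (Pi.single i 1)`), the operator
`d_h = ∑ᵢ (yᵢ − hᵢxᵢ)·(left multiplication by eᵢ) + ∇ᵢW(h·x,y)·(contraction with εᵢ)`
squares to multiplication by `W(y) − W(x)`; i.e. `(Δ_h, d_h)` is a matrix factorization of
`W ⊟ W`.  Contraction with the dual basis vector `εᵢ = LinearMap.proj i` is
`CliffordAlgebra.contractLeft` (recall `ExteriorAlgebra S M = CliffordAlgebra 0`). -/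
set_option maxHeartbeats 2000000 in
set_option synthInstance.maxHeartbeats 400000 in
theorem stmt2 (k : Type) [Field k] (n : ℕ) (W : MvPolynomial (Fin n) k)
    (h : Fin n → kˣ) (hsym : IsDiagSym h W)
    (nab : Fin n → MvPolynomial (Fin n ⊕ Fin n) k) (hnab : IsNabla W nab)
    (dh : ExteriorAlgebra (MvPolynomial (Fin n ⊕ Fin n) k)
            (Fin n → MvPolynomial (Fin n ⊕ Fin n) k) →ₗ[MvPolynomial (Fin n ⊕ Fin n) k]
          ExteriorAlgebra (MvPolynomial (Fin n ⊕ Fin n) k)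
            (Fin n → MvPolynomial (Fin n ⊕ Fin n) k))
    (hdh : dh = ∑ i : Fin n,
      ((Yv i - (h i : k) • Xv i : MvPolynomial (Fin n ⊕ Fin n) k) •
          LinearMap.mulLeft (MvPolynomial (Fin n ⊕ Fin n) k)
            (ExteriorAlgebra.ι (M := Fin n → MvPolynomial (Fin n ⊕ Fin n) k)
              (MvPolynomial (Fin n ⊕ Fin n) k) (Pi.single i 1))
        + (substH h (nab i) : MvPolynomial (Fin n ⊕ Fin n) k) • CliffordAlgebra.contractLeft
            (Q := (0 : QuadraticForm (MvPolynomial (Fin n ⊕ Fin n) k)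
              (Fin n → MvPolynomial (Fin n ⊕ Fin n) k))) (LinearMap.proj i))) :
    ∀ v, dh (dh v) = ((aeval Yv W - aeval Xv W : MvPolynomial (Fin n ⊕ Fin n) k) • v) := by
  classical
  let Q0 : QuadraticForm (MvPolynomial (Fin n ⊕ Fin n) k)
      (Fin n → MvPolynomial (Fin n ⊕ Fin n) k) := 0
  let a : Fin n → MvPolynomial (Fin n ⊕ Fin n) k := fun i => Yv i - (h i : k) • Xv i
  let b : Fin n → MvPolynomial (Fin n ⊕ Fin n) k := fun i => substH h (nab i)
  let dd : Module.Dual (MvPolynomial (Fin n ⊕ Fin n) k)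
      (Fin n → MvPolynomial (Fin n ⊕ Fin n) k) := ∑ i, b i • (LinearMap.proj i)
  -- Step 1 : rewrite dh
  have hdh' : ∀ v, dh v =
      CliffordAlgebra.ι Q0 a * v + CliffordAlgebra.contractLeft dd v := by
    intro v
    rw [hdh]
    simp only [LinearMap.sum_apply, LinearMap.add_apply, LinearMap.smul_apply,
      LinearMap.mulLeft_apply]
    rw [Finset.sum_add_distrib]
    congr 1
    · have hι : (ExteriorAlgebra.ι (M := Fin n → MvPolynomial (Fin n ⊕ Fin n) k)
          (MvPolynomial (Fin n ⊕ Fin n) k)) = CliffordAlgebra.ι Q0 := rfl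
      have hav : a = ∑ i, a i • (Pi.single i 1 : Fin n → MvPolynomial (Fin n ⊕ Fin n) k) := by
        funext t
        simp [a, Finset.sum_apply, Pi.single_apply]
      conv_rhs => rw [hav]
      rw [map_sum, Finset.sum_mul]
      refine Finset.sum_congr rfl fun i _ => ?_
      rw [hι, map_smul, smul_mul_assoc]
    · rw [show dd = ∑ i, b i • (LinearMap.proj i) from rfl, map_sum,
        LinearMap.sum_apply]
      refine Finset.sum_congr rfl fun i _ => ?_
      rw [map_smul, LinearMap.smul_apply]
  -- Step 2 : the square
  have hsq : ∀ v, dh (dh v) = dd a • v := by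
    intro v
    rw [hdh' v, hdh', mul_add, map_add, CliffordAlgebra.contractLeft_ι_mul,
      CliffordAlgebra.contractLeft_contractLeft, ← mul_assoc,
      CliffordAlgebra.ι_sq_scalar]
    have : Q0 a = 0 := rfl
    rw [this, map_zero, zero_mul]
    abel
  -- Step 3 : the scalar
  have hsH : ∀ (f : Fin n → MvPolynomial (Fin n ⊕ Fin n) k) (P : MvPolynomial (Fin n) k),
      substH h (aeval f P) = aeval (fun t => substH h (f t)) P := by
    intro f P
    exact MvPolynomial.comp_aeval_apply _ _ _
  let G : ℕ → MvPolynomial (Fin n ⊕ Fin n) k := fun j =>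
    substH h (aeval (fun t : Fin n => if (t : ℕ) < j then Yv t else Xv t) W)
  have hscalar : dd a = aeval Yv W - aeval Xv W := by
    have hdda : dd a = ∑ i, b i * a i := by
      simp only [dd, LinearMap.sum_apply, LinearMap.smul_apply, LinearMap.proj_apply,
        smul_eq_mul]
    have hterm : ∀ i : Fin n, b i * a i = G ((i : ℕ) + 1) - G (i : ℕ) := by
      intro i
      have h1 : substH h ((Yv i - Xv i) * nab i) = a i * b i := by
        have hx : substH h (Xv i) = (h i : k) • Xv i := by
          simp [substH, Xv]
        have hy : substH h (Yv i) = Yv i := by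
          simp [substH, Xv, Yv]
        rw [map_mul, map_sub, hx, hy]
      have h2 := congrArg (substH h) (hnab i)
      rw [h1, map_sub] at h2
      have e1 : (fun t : Fin n => if t ≤ i then Yv t else Xv t) =
          (fun t : Fin n => if (t : ℕ) < (i : ℕ) + 1 then Yv t else Xv t :
            Fin n → MvPolynomial (Fin n ⊕ Fin n) k) := by
        funext t
        exact if_congr Nat.lt_succ_iff.symm rfl rfl
      have e2 : (fun t : Fin n => if t < i then Yv t else Xv t) =
          (fun t : Fin n => if (t : ℕ) < (i : ℕ) then Yv t else Xv t :
            Fin n → MvPolynomial (Fin n ⊕ Fin n) k) := by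
        funext t
        exact if_congr Iff.rfl rfl rfl
      rw [e1, e2] at h2
      rw [mul_comm]
      exact h2
    have htel : ∑ i : Fin n, (G ((i : ℕ) + 1) - G (i : ℕ)) = G n - G 0 := by
      rw [Fin.sum_univ_eq_sum_range (fun j => G (j + 1) - G j) n]
      exact Finset.sum_range_sub G n
    have hGn : G n = aeval Yv W := by
      have e : (fun t : Fin n => if (t : ℕ) < n then Yv t else Xv t) =
          (Yv : Fin n → MvPolynomial (Fin n ⊕ Fin n) k) := by
        funext t; exact if_pos t.isLt
      show substH h (aeval (fun t : Fin n => if (t : ℕ) < n then Yv t else Xv t) W) =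
        aeval Yv W
      rw [e, hsH]
      have e2 : (fun t : Fin n => substH h (Yv t)) =
          (Yv : Fin n → MvPolynomial (Fin n ⊕ Fin n) k) := by
        funext t; simp [substH, Yv]
      rw [e2]
    have hG0 : G 0 = aeval Xv W := by
      have e : (fun t : Fin n => if (t : ℕ) < 0 then Yv t else Xv t) =
          (Xv : Fin n → MvPolynomial (Fin n ⊕ Fin n) k) := by
        funext t; exact if_neg (Nat.not_lt_zero _)
      show substH h (aeval (fun t : Fin n => if (t : ℕ) < 0 then Yv t else Xv t) W) =
        aeval Xv W
      rw [e, hsH]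
      have hx : ∀ t : Fin n, substH h (Xv t) = (h t : k) • Xv t := by
        intro t; simp [substH, Xv]
      simp only [hx]
      have hs := congrArg (toS (k := k) (n := n)) hsym
      rw [show (toS (k := k) (n := n)) = aeval Xv from rfl,
        MvPolynomial.comp_aeval_apply] at hs
      have e3 : (fun t : Fin n =>
          (aeval Xv : MvPolynomial (Fin n) k →ₐ[k] MvPolynomial (Fin n ⊕ Fin n) k)
            ((h t : k) • (X t : MvPolynomial (Fin n) k))) =
          (fun t : Fin n => (h t : k) • Xv t) := by
        funext t; rw [map_smul, aeval_X]
      rw [e3] at hs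
      exact hs
    rw [hdda]
    calc ∑ i, b i * a i = ∑ i : Fin n, (G ((i : ℕ) + 1) - G (i : ℕ)) :=
          Finset.sum_congr rfl fun i _ => hterm i
      _ = G n - G 0 := htel
      _ = aeval Yv W - aeval Xv W := by rw [hGn, hG0]
  intro v
  rw [hsq, hscalar]
end
end

section
/- Let h = (h₁,…,hₙ) be a tuple of units of k and let i be an index with hᵢ = 1. Then (yᵢ − xᵢ)² divides W̄^h_{i,i} − W̄^h_{i−1,i−1} − (yᵢ − xᵢ)·∂_{xᵢ}W̄^h_{i−1,i} in S. (This is the well-definedness of the structure constant g^h_{ii} for i ∈ I^h.) -/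
/-! Write `V := W̄^h_{i−1,i}`. Since `hᵢ = 1`, also `V = W̄^h_{i−1,i−1}`, and `W̄^h_{i,i}` is `V` with
`xᵢ` renamed to `yᵢ`. The claim is then the first-order Taylor expansion of `V` in the variable
`xᵢ`, which holds for any multivariate polynomial and any two of its variables. -/

noncomputable section
open MvPolynomial
open scoped Classical

variable {k : Type} [Field k] {n : ℕ}

namespace MvPolynomial

variable {R σ : Type*} [CommRing R] [DecidableEq σ]

theorem sq_sub_dvd_rename_update_sub_sub_pderiv (a b : σ) (F : MvPolynomial σ R) :
    (X b - X a) ^ 2 ∣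
      rename (Function.update id a b) F - F - (X b - X a) * pderiv a F := by
  induction F using MvPolynomial.induction_on with
  | C r => simp
  | add F G hF hG =>
    convert dvd_add hF hG using 1
    simp only [map_add]
    ring
  | mul_X F c hF =>
    by_cases hc : c = a
    · subst hc
      -- Taylor remainder of `F xₐ` is `xᵦ` times that of `F`, plus `(xᵦ − xₐ)² ∂ₐF`.
      convert dvd_add (hF.mul_right (X b)) (dvd_mul_right _ (pderiv c F)) using 1
      simp only [map_mul, rename_X, Function.update_self, pderiv_mul, pderiv_X_self]
      ring
    · convert hF.mul_right (X c) using 1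
      simp only [map_mul, rename_X, Function.update_of_ne hc, id, pderiv_mul, pderiv_X_of_ne hc]
      ring

end MvPolynomial

theorem Wbar_succ_right_of_eq_one {h : Fin n → kˣ} {i : Fin n} (hi : h i = 1)
    (W : MvPolynomial (Fin n) k) (j : ℕ) :
    Wbar h W j ((i : ℕ) + 1) = Wbar h W j i := by
  unfold Wbar
  congr 2
  ext1 t
  rcases lt_trichotomy (t : ℕ) i with ht | ht | ht
  · simp [ht, Nat.lt_succ_of_lt ht]
  · simp [Fin.ext ht, hi]
  · simp [show ¬ (t : ℕ) < i + 1 by omega, show ¬ (t : ℕ) < i by omega]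

theorem Wbar_succ_left (h : Fin n → kˣ) (W : MvPolynomial (Fin n) k) (j : Fin n) (i : ℕ)
    (hji : (j : ℕ) < i) :
    Wbar h W ((j : ℕ) + 1) i =
      rename (Function.update id (Sum.inl j) (Sum.inr j)) (Wbar h W j i) := by
  unfold Wbar
  rw [comp_aeval_apply]
  congr 2
  ext1 t
  rcases lt_trichotomy (t : ℕ) j with ht | ht | ht
  · simp [ht, Nat.lt_succ_of_lt ht, Yv]
  · obtain rfl := Fin.ext ht
    simp [hji, Yv, Xv]
  · have htj : t ≠ j := (Fin.ne_of_lt ht).symm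
    simp only [show ¬ (t : ℕ) < j + 1 by omega, show ¬ (t : ℕ) < j by omega, if_false]
    split_ifs <;> simp [Xv, htj]

theorem stmt3 (k : Type) [Field k] (n : ℕ) (W : MvPolynomial (Fin n) k)
    (h : Fin n → kˣ) (i : Fin n) (hi : h i = 1) :
    (Yv i - Xv i) ^ 2 ∣
      Wbar h W ((i : ℕ)+1) ((i : ℕ)+1) - Wbar h W (i : ℕ) (i : ℕ) -
        (Yv i - Xv i) * pderiv (Sum.inl i) (Wbar h W (i : ℕ) ((i : ℕ)+1)) := by
  rw [Wbar_succ_left h W i _ (Nat.lt_succ_self i), Wbar_succ_right_of_eq_one hi]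
  exact sq_sub_dvd_rename_update_sub_sub_pderiv (Sum.inl i) (Sum.inr i) (Wbar h W i i)
end
end

section
/- Let h = (h₁,…,hₙ) be a tuple of units of k and let 1 ≤ j < i ≤ n with hᵢ ≠ 1. Then (y_j − x_j)(xᵢ − hᵢxᵢ) divides (W̄^h_{j,i} − W̄^h_{j−1,i}) − (W̄^h_{j,i−1} − W̄^h_{j−1,i−1}) in S. (This is the well-definedness of the structure constant g^h_{ji} for i ∈ I_h.) -/
noncomputable section
open MvPolynomial
open scoped Classical

variable {k : Type} [Field k] {n : ℕ}

lemma aeval_sub_dvd' {S : Type} [CommRing S] [Algebra k S]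
    (v w : Fin n → S) (s : Fin n) (hvw : ∀ t, t ≠ s → v t = w t) (W : MvPolynomial (Fin n) k) :
    (v s - w s) ∣ aeval v W - aeval w W := by
  induction W using MvPolynomial.induction_on with
  | C c => simp
  | add p q hp hq =>
    simpa [map_add, add_sub_add_comm] using dvd_add hp hq
  | mul_X p t hp =>
    simp only [map_mul, aeval_X]
    by_cases ht : t = s
    · subst ht
      have e : aeval v p * v t - aeval w p * w t
          = v t * (aeval v p - aeval w p) + aeval w p * (v t - w t) := by ring
      rw [e]
      exact dvd_add (hp.mul_left _) (dvd_rfl.mul_left _)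
    · rw [hvw t ht]
      have e : aeval v p * w t - aeval w p * w t = w t * (aeval v p - aeval w p) := by ring
      rw [e]
      exact hp.mul_left _

lemma aeval_double_sub_dvd {S : Type} [CommRing S] [Algebra k S]
    (v₁ v₂ v₃ v₄ : Fin n → S) (s₁ s₂ : Fin n) (hs : s₁ ≠ s₂)
    (h12 : ∀ t, t ≠ s₁ → v₁ t = v₂ t) (h34 : ∀ t, t ≠ s₁ → v₃ t = v₄ t)
    (h13 : ∀ t, t ≠ s₂ → v₁ t = v₃ t) (h24 : ∀ t, t ≠ s₂ → v₂ t = v₄ t)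
    (W : MvPolynomial (Fin n) k) :
    (v₁ s₁ - v₂ s₁) * (v₁ s₂ - v₃ s₂) ∣
      (aeval v₁ W - aeval v₂ W) - (aeval v₃ W - aeval v₄ W) := by
  induction W using MvPolynomial.induction_on with
  | C c => simp
  | add p q hp hq =>
    have e : ((aeval v₁ (p + q) - aeval v₂ (p + q)) - (aeval v₃ (p + q) - aeval v₄ (p + q)))
        = ((aeval v₁ p - aeval v₂ p) - (aeval v₃ p - aeval v₄ p))
          + ((aeval v₁ q - aeval v₂ q) - (aeval v₃ q - aeval v₄ q)) := by
      simp only [map_add]; ring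
    rw [e]; exact dvd_add hp hq
  | mul_X p t hp =>
    simp only [map_mul, aeval_X]
    by_cases ht1 : t = s₁
    · subst ht1
      have e13 : v₁ t = v₃ t := h13 t hs
      have e24 : v₂ t = v₄ t := h24 t hs
      have e : (aeval v₁ p * v₁ t - aeval v₂ p * v₂ t)
          - (aeval v₃ p * v₃ t - aeval v₄ p * v₄ t)
          = v₁ t * ((aeval v₁ p - aeval v₂ p) - (aeval v₃ p - aeval v₄ p))
            + (v₁ t - v₂ t) * (aeval v₂ p - aeval v₄ p) := by
        rw [← e13, ← e24]; ring
      rw [e]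
      refine dvd_add (hp.mul_left _) ?_
      have hd : (v₂ s₂ - v₄ s₂) ∣ aeval v₂ p - aeval v₄ p := aeval_sub_dvd' v₂ v₄ s₂ h24 p
      have e2 : v₂ s₂ - v₄ s₂ = v₁ s₂ - v₃ s₂ := by
        rw [← h12 s₂ (Ne.symm hs), ← h34 s₂ (Ne.symm hs)]
      rw [e2] at hd
      exact mul_dvd_mul dvd_rfl hd
    · by_cases ht2 : t = s₂
      · subst ht2
        have e12 : v₁ t = v₂ t := h12 t (Ne.symm hs)
        have e34 : v₃ t = v₄ t := h34 t (Ne.symm hs)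
        have e : (aeval v₁ p * v₁ t - aeval v₂ p * v₂ t)
            - (aeval v₃ p * v₃ t - aeval v₄ p * v₄ t)
            = v₁ t * ((aeval v₁ p - aeval v₂ p) - (aeval v₃ p - aeval v₄ p))
              + (v₁ t - v₃ t) * (aeval v₃ p - aeval v₄ p) := by
          rw [← e12, ← e34]; ring
        rw [e]
        refine dvd_add (hp.mul_left _) ?_
        have hd : (v₃ s₁ - v₄ s₁) ∣ aeval v₃ p - aeval v₄ p := aeval_sub_dvd' v₃ v₄ s₁ h34 p
        have e2 : v₃ s₁ - v₄ s₁ = v₁ s₁ - v₂ s₁ := by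
          rw [← h13 s₁ hs, ← h24 s₁ hs]
        rw [e2] at hd
        rw [mul_comm (v₁ s₁ - v₂ s₁)]
        exact mul_dvd_mul dvd_rfl hd
      · have e12 : v₁ t = v₂ t := h12 t ht1
        have e34 : v₃ t = v₄ t := h34 t ht1
        have e13 : v₁ t = v₃ t := h13 t ht2
        have e : (aeval v₁ p * v₁ t - aeval v₂ p * v₂ t)
            - (aeval v₃ p * v₃ t - aeval v₄ p * v₄ t)
            = v₁ t * ((aeval v₁ p - aeval v₂ p) - (aeval v₃ p - aeval v₄ p)) := by
          rw [← e12, ← e34, ← e13]; ring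
        rw [e]
        exact hp.mul_left _

/- STATEMENT 4: for `1 ≤ j < i ≤ n` with `hᵢ ≠ 1`, `(y_j − x_j)(xᵢ − hᵢxᵢ)` divides
`(W̄^h_{j,i} − W̄^h_{j−1,i}) − (W̄^h_{j,i−1} − W̄^h_{j−1,i−1})` in `S`
(well-definedness of `g^h_{ji}` for `i ∈ I_h`). -/
theorem stmt4 (k : Type) [Field k] (n : ℕ) (W : MvPolynomial (Fin n) k)
    (h : Fin n → kˣ) (j i : Fin n) (hji : j < i) (hi : h i ≠ 1) :
    (Yv j - Xv j) * (Xv i - (h i : k) • Xv i) ∣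
      (Wbar h W ((j : ℕ)+1) ((i : ℕ)+1) - Wbar h W (j : ℕ) ((i : ℕ)+1)) -
      (Wbar h W ((j : ℕ)+1) (i : ℕ) - Wbar h W (j : ℕ) (i : ℕ)) := by
  have hji' : (j:ℕ) < (i:ℕ) := hji
  simp only [Wbar]
  have h12 : ∀ t : Fin n, t ≠ j →
      (if (t:ℕ) < (j:ℕ)+1 then (Yv t : MvPolynomial (Fin n ⊕ Fin n) k) else if (t:ℕ) < (i:ℕ)+1 then Xv t else (h t : k) • Xv t)
      = (if (t:ℕ) < (j:ℕ) then (Yv t : MvPolynomial (Fin n ⊕ Fin n) k) else if (t:ℕ) < (i:ℕ)+1 then Xv t else (h t : k) • Xv t) := by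
    intro t ht
    have htv : (t:ℕ) ≠ (j:ℕ) := fun e => ht (Fin.ext e)
    have : ((t:ℕ) < (j:ℕ)+1) ↔ ((t:ℕ) < (j:ℕ)) := by omega
    simp [this]
  have h34 : ∀ t : Fin n, t ≠ j →
      (if (t:ℕ) < (j:ℕ)+1 then (Yv t : MvPolynomial (Fin n ⊕ Fin n) k) else if (t:ℕ) < (i:ℕ) then Xv t else (h t : k) • Xv t)
      = (if (t:ℕ) < (j:ℕ) then (Yv t : MvPolynomial (Fin n ⊕ Fin n) k) else if (t:ℕ) < (i:ℕ) then Xv t else (h t : k) • Xv t) := by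
    intro t ht
    have htv : (t:ℕ) ≠ (j:ℕ) := fun e => ht (Fin.ext e)
    have : ((t:ℕ) < (j:ℕ)+1) ↔ ((t:ℕ) < (j:ℕ)) := by omega
    simp [this]
  have h13 : ∀ t : Fin n, t ≠ i →
      (if (t:ℕ) < (j:ℕ)+1 then (Yv t : MvPolynomial (Fin n ⊕ Fin n) k) else if (t:ℕ) < (i:ℕ)+1 then Xv t else (h t : k) • Xv t)
      = (if (t:ℕ) < (j:ℕ)+1 then (Yv t : MvPolynomial (Fin n ⊕ Fin n) k) else if (t:ℕ) < (i:ℕ) then Xv t else (h t : k) • Xv t) := by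
    intro t ht
    have htv : (t:ℕ) ≠ (i:ℕ) := fun e => ht (Fin.ext e)
    have : ((t:ℕ) < (i:ℕ)+1) ↔ ((t:ℕ) < (i:ℕ)) := by omega
    simp [this]
  have h24 : ∀ t : Fin n, t ≠ i →
      (if (t:ℕ) < (j:ℕ) then (Yv t : MvPolynomial (Fin n ⊕ Fin n) k) else if (t:ℕ) < (i:ℕ)+1 then Xv t else (h t : k) • Xv t)
      = (if (t:ℕ) < (j:ℕ) then (Yv t : MvPolynomial (Fin n ⊕ Fin n) k) else if (t:ℕ) < (i:ℕ) then Xv t else (h t : k) • Xv t) := by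
    intro t ht
    have htv : (t:ℕ) ≠ (i:ℕ) := fun e => ht (Fin.ext e)
    have : ((t:ℕ) < (i:ℕ)+1) ↔ ((t:ℕ) < (i:ℕ)) := by omega
    simp [this]
  have key := aeval_double_sub_dvd
    (fun t : Fin n => if (t:ℕ) < (j:ℕ)+1 then (Yv t : MvPolynomial (Fin n ⊕ Fin n) k) else if (t:ℕ) < (i:ℕ)+1 then Xv t else (h t : k) • Xv t)
    (fun t : Fin n => if (t:ℕ) < (j:ℕ) then (Yv t : MvPolynomial (Fin n ⊕ Fin n) k) else if (t:ℕ) < (i:ℕ)+1 then Xv t else (h t : k) • Xv t)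
    (fun t : Fin n => if (t:ℕ) < (j:ℕ)+1 then (Yv t : MvPolynomial (Fin n ⊕ Fin n) k) else if (t:ℕ) < (i:ℕ) then Xv t else (h t : k) • Xv t)
    (fun t : Fin n => if (t:ℕ) < (j:ℕ) then (Yv t : MvPolynomial (Fin n ⊕ Fin n) k) else if (t:ℕ) < (i:ℕ) then Xv t else (h t : k) • Xv t)
    j i (ne_of_lt hji) h12 h34 h13 h24 W
  have ej : ¬ ((j:ℕ) < (j:ℕ)) := Nat.lt_irrefl _
  have ej1 : (j:ℕ) < (j:ℕ)+1 := Nat.lt_succ_self _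
  have eji : (j:ℕ) < (i:ℕ)+1 := by omega
  have ei1 : ¬ ((i:ℕ) < (j:ℕ)+1) := by omega
  have ei2 : (i:ℕ) < (i:ℕ)+1 := Nat.lt_succ_self _
  have ei3 : ¬ ((i:ℕ) < (i:ℕ)) := Nat.lt_irrefl _
  rw [if_pos ej1, if_neg ej, if_pos eji, if_neg ei1, if_pos ei2, if_neg ei1, if_neg ei3] at key
  exact key
end
end

section
/- Let h = (h₁,…,hₙ) be a tuple of units of k and let 1 ≤ j < i ≤ n with h_j ≠ 1 and hᵢ ≠ 1. Then (x_j − h_jx_j)(xᵢ − hᵢxᵢ) divides (W̃^h_{j,i} − W̃^h_{j−1,i}) − (W̃^h_{j,i−1} − W̃^h_{j−1,i−1}) in R. (This is the well-definedness of the structure constant f^h_{ji} for j, i ∈ I_h.) -/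
noncomputable section
open MvPolynomial
open scoped Classical

variable {k : Type} [Field k] {n : ℕ}

/- STATEMENT 5: for `1 ≤ j < i ≤ n` with `h_j ≠ 1` and `hᵢ ≠ 1`,
`(x_j − h_jx_j)(xᵢ − hᵢxᵢ)` divides
`(W̃^h_{j,i} − W̃^h_{j−1,i}) − (W̃^h_{j,i−1} − W̃^h_{j−1,i−1})` in `R`
(well-definedness of `f^h_{ji}` for `j, i ∈ I_h`). -/
lemma aux1 {k : Type} [CommSemiring k] {A : Type} [CommRing A] [Algebra k A] {n : ℕ}
    (s : Fin n → A) (t : Fin n) (u v : A) (W : MvPolynomial (Fin n) k) :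
    (u - v) ∣ aeval (Function.update s t u) W - aeval (Function.update s t v) W := by
  induction W using MvPolynomial.induction_on with
  | C a => simp
  | add p q hp hq =>
      have : aeval (Function.update s t u) (p + q) - aeval (Function.update s t v) (p + q)
          = (aeval (Function.update s t u) p - aeval (Function.update s t v) p)
            + (aeval (Function.update s t u) q - aeval (Function.update s t v) q) := by
        simp [map_add]; ring
      rw [this]; exact dvd_add hp hq
  | mul_X p t' hp =>
      set Au := aeval (Function.update s t u) p
      set Av := aeval (Function.update s t v) p
      by_cases ht : t' = t
      · subst ht
        have : aeval (Function.update s t' u) (p * X t') - aeval (Function.update s t' v) (p * X t')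
            = u * (Au - Av) + (u - v) * Av := by
          simp [map_mul, Au, Av]; ring
        rw [this]
        exact dvd_add (hp.mul_left u) (dvd_mul_right _ _)
      · have : aeval (Function.update s t u) (p * X t') - aeval (Function.update s t v) (p * X t')
            = (Au - Av) * s t' := by
          simp [map_mul, Function.update_of_ne ht, Au, Av]; ring
        rw [this]
        exact hp.mul_right _

lemma aux2 {k : Type} [CommSemiring k] {A : Type} [CommRing A] [Algebra k A] {n : ℕ}
    (s : Fin n → A) (t₁ t₂ : Fin n) (hne : t₁ ≠ t₂) (a₁ b₁ a₂ b₂ : A)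
    (W : MvPolynomial (Fin n) k) :
    (a₁ - b₁) * (a₂ - b₂) ∣
      aeval (Function.update (Function.update s t₁ a₁) t₂ a₂) W
      - aeval (Function.update (Function.update s t₁ b₁) t₂ a₂) W
      - (aeval (Function.update (Function.update s t₁ a₁) t₂ b₂) W
        - aeval (Function.update (Function.update s t₁ b₁) t₂ b₂) W) := by
  induction W using MvPolynomial.induction_on with
  | C a => simp
  | add p q hp hq =>
      have key : ∀ r : MvPolynomial (Fin n) k,
        aeval (Function.update (Function.update s t₁ a₁) t₂ a₂) r
        - aeval (Function.update (Function.update s t₁ b₁) t₂ a₂) r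
        - (aeval (Function.update (Function.update s t₁ a₁) t₂ b₂) r
          - aeval (Function.update (Function.update s t₁ b₁) t₂ b₂) r) =
        aeval (Function.update (Function.update s t₁ a₁) t₂ a₂) r
        - aeval (Function.update (Function.update s t₁ b₁) t₂ a₂) r
        - (aeval (Function.update (Function.update s t₁ a₁) t₂ b₂) r
          - aeval (Function.update (Function.update s t₁ b₁) t₂ b₂) r) := fun _ => rfl
      have : aeval (Function.update (Function.update s t₁ a₁) t₂ a₂) (p + q)
        - aeval (Function.update (Function.update s t₁ b₁) t₂ a₂) (p + q)
        - (aeval (Function.update (Function.update s t₁ a₁) t₂ b₂) (p + q)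
          - aeval (Function.update (Function.update s t₁ b₁) t₂ b₂) (p + q)) =
        (aeval (Function.update (Function.update s t₁ a₁) t₂ a₂) p
        - aeval (Function.update (Function.update s t₁ b₁) t₂ a₂) p
        - (aeval (Function.update (Function.update s t₁ a₁) t₂ b₂) p
          - aeval (Function.update (Function.update s t₁ b₁) t₂ b₂) p)) +
        (aeval (Function.update (Function.update s t₁ a₁) t₂ a₂) q
        - aeval (Function.update (Function.update s t₁ b₁) t₂ a₂) q
        - (aeval (Function.update (Function.update s t₁ a₁) t₂ b₂) q
          - aeval (Function.update (Function.update s t₁ b₁) t₂ b₂) q)) := by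
        simp [map_add]; ring
      rw [this]; exact dvd_add hp hq
  | mul_X p t hp =>
      set A11 := aeval (Function.update (Function.update s t₁ a₁) t₂ a₂) p with hA11
      set A01 := aeval (Function.update (Function.update s t₁ b₁) t₂ a₂) p with hA01
      set A10 := aeval (Function.update (Function.update s t₁ a₁) t₂ b₂) p with hA10
      set A00 := aeval (Function.update (Function.update s t₁ b₁) t₂ b₂) p with hA00
      by_cases h2 : t = t₂
      · subst h2
        have e : aeval (Function.update (Function.update s t₁ a₁) t a₂) (p * X t)
            - aeval (Function.update (Function.update s t₁ b₁) t a₂) (p * X t)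
            - (aeval (Function.update (Function.update s t₁ a₁) t b₂) (p * X t)
              - aeval (Function.update (Function.update s t₁ b₁) t b₂) (p * X t))
            = a₂ * (A11 - A01 - (A10 - A00)) + (a₂ - b₂) * (A10 - A00) := by
          simp [map_mul, hA11, hA01, hA10, hA00]; ring
        rw [e]
        refine dvd_add (hp.mul_left a₂) ?_
        have hd : (a₁ - b₁) ∣ A10 - A00 := by
          rw [hA10, hA00, Function.update_comm hne a₁ b₂ s, Function.update_comm hne b₁ b₂ s]
          exact aux1 _ _ _ _ _
        obtain ⟨c, hc⟩ := hd
        exact ⟨c, by rw [hc]; ring⟩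
      · by_cases h1 : t = t₁
        · subst h1
          have hv1 : Function.update (Function.update s t a₁) t₂ a₂ t = a₁ := by
            rw [Function.update_of_ne h2, Function.update_self]
          have hv2 : Function.update (Function.update s t b₁) t₂ a₂ t = b₁ := by
            rw [Function.update_of_ne h2, Function.update_self]
          have hv3 : Function.update (Function.update s t a₁) t₂ b₂ t = a₁ := by
            rw [Function.update_of_ne h2, Function.update_self]
          have hv4 : Function.update (Function.update s t b₁) t₂ b₂ t = b₁ := by
            rw [Function.update_of_ne h2, Function.update_self]
          have e : aeval (Function.update (Function.update s t a₁) t₂ a₂) (p * X t)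
              - aeval (Function.update (Function.update s t b₁) t₂ a₂) (p * X t)
              - (aeval (Function.update (Function.update s t a₁) t₂ b₂) (p * X t)
                - aeval (Function.update (Function.update s t b₁) t₂ b₂) (p * X t))
              = a₁ * (A11 - A01 - (A10 - A00)) + (a₁ - b₁) * (A01 - A00) := by
            simp only [map_mul, aeval_X, hv1, hv2, hv3, hv4]
            rw [hA11, hA01, hA10, hA00]; ring
          rw [e]
          refine dvd_add (hp.mul_left a₁) ?_
          have hd : (a₂ - b₂) ∣ A01 - A00 := aux1 _ _ _ _ _
          obtain ⟨c, hc⟩ := hd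
          exact ⟨c, by rw [hc]; ring⟩
        · have hv : ∀ u v : A, Function.update (Function.update s t₁ u) t₂ v t = s t := by
            intro u v
            rw [Function.update_of_ne h2, Function.update_of_ne h1]
          have e : aeval (Function.update (Function.update s t₁ a₁) t₂ a₂) (p * X t)
              - aeval (Function.update (Function.update s t₁ b₁) t₂ a₂) (p * X t)
              - (aeval (Function.update (Function.update s t₁ a₁) t₂ b₂) (p * X t)
                - aeval (Function.update (Function.update s t₁ b₁) t₂ b₂) (p * X t))
              = (A11 - A01 - (A10 - A00)) * s t := by
            simp only [map_mul, aeval_X, hv]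
            rw [hA11, hA01, hA10, hA00]; ring
          rw [e]
          exact hp.mul_right _

theorem stmt5 (k : Type) [Field k] (n : ℕ) (W : MvPolynomial (Fin n) k)
    (h : Fin n → kˣ) (j i : Fin n) (hji : j < i) (hj : h j ≠ 1) (hi : h i ≠ 1) :
    (X j - (h j : k) • X j) * (X i - (h i : k) • X i) ∣
      (Wtil h W ((j : ℕ)+1) ((i : ℕ)+1) - Wtil h W (j : ℕ) ((i : ℕ)+1)) -
      (Wtil h W ((j : ℕ)+1) (i : ℕ) - Wtil h W (j : ℕ) (i : ℕ)) := by
  have hji' : (j : ℕ) < (i : ℕ) := hji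
  have hne : j ≠ i := ne_of_lt hji
  set s : Fin n → MvPolynomial (Fin n) k := fun t =>
    if (t : ℕ) < (j : ℕ) then xh h t else if (t : ℕ) < (i : ℕ) then X t
      else (h t : k) • X t with hs
  have key := aux2 s j i hne 0 (X j) (X i) ((h i : k) • X i) W
  have e11 : Function.update (Function.update s j 0) i (X i) = fun t : Fin n =>
      if (t : ℕ) < (j : ℕ)+1 then xh h t else if (t : ℕ) < (i : ℕ)+1 then X t
        else (h t : k) • X t := by
    funext t
    by_cases hti : t = i
    · subst hti
      rw [Function.update_self, if_neg (by omega), if_pos (by omega)]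
    · rw [Function.update_of_ne hti]
      by_cases htj : t = j
      · subst htj
        rw [Function.update_self, if_pos (by omega)]
        simp [xh, hj]
      · have h1 : (t : ℕ) ≠ (j : ℕ) := fun hh => htj (Fin.ext hh)
        have h2 : (t : ℕ) ≠ (i : ℕ) := fun hh => hti (Fin.ext hh)
        rw [Function.update_of_ne htj]
        simp only [hs,
          show ((t : ℕ) < (j : ℕ)+1) ↔ ((t : ℕ) < (j : ℕ)) from by omega,
          show ((t : ℕ) < (i : ℕ)+1) ↔ ((t : ℕ) < (i : ℕ)) from by omega]
  have e01 : Function.update (Function.update s j (X j)) i (X i) = fun t : Fin n =>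
      if (t : ℕ) < (j : ℕ) then xh h t else if (t : ℕ) < (i : ℕ)+1 then X t
        else (h t : k) • X t := by
    funext t
    by_cases hti : t = i
    · subst hti
      rw [Function.update_self, if_neg (by omega), if_pos (by omega)]
    · rw [Function.update_of_ne hti]
      by_cases htj : t = j
      · subst htj
        rw [Function.update_self, if_neg (by omega), if_pos (by omega)]
      · have h2 : (t : ℕ) ≠ (i : ℕ) := fun hh => hti (Fin.ext hh)
        rw [Function.update_of_ne htj]
        simp only [hs,
          show ((t : ℕ) < (i : ℕ)+1) ↔ ((t : ℕ) < (i : ℕ)) from by omega]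
  have e10 : Function.update (Function.update s j 0) i ((h i : k) • X i) = fun t : Fin n =>
      if (t : ℕ) < (j : ℕ)+1 then xh h t else if (t : ℕ) < (i : ℕ) then X t
        else (h t : k) • X t := by
    funext t
    by_cases hti : t = i
    · subst hti
      rw [Function.update_self, if_neg (by omega), if_neg (by omega)]
    · rw [Function.update_of_ne hti]
      by_cases htj : t = j
      · subst htj
        rw [Function.update_self, if_pos (by omega)]
        simp [xh, hj]
      · have h1 : (t : ℕ) ≠ (j : ℕ) := fun hh => htj (Fin.ext hh)
        rw [Function.update_of_ne htj]
        simp only [hs,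
          show ((t : ℕ) < (j : ℕ)+1) ↔ ((t : ℕ) < (j : ℕ)) from by omega]
  have e00 : Function.update (Function.update s j (X j)) i ((h i : k) • X i) = fun t : Fin n =>
      if (t : ℕ) < (j : ℕ) then xh h t else if (t : ℕ) < (i : ℕ) then X t
        else (h t : k) • X t := by
    funext t
    by_cases hti : t = i
    · subst hti
      rw [Function.update_self, if_neg (by omega), if_neg (by omega)]
    · rw [Function.update_of_ne hti]
      by_cases htj : t = j
      · subst htj
        rw [Function.update_self, if_neg (by omega), if_pos (by omega)]
      · rw [Function.update_of_ne htj]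
  rw [e11, e01, e10, e00] at key
  simp only [Wtil]
  obtain ⟨c, hc⟩ := key
  have hcoef : (h j : k) ≠ 1 := fun hh => hj (Units.ext (by simpa using hh))
  have ha : (1 : k) - (h j : k) ≠ 0 := sub_ne_zero.mpr hcoef.symm
  refine ⟨C (-(1 - (h j : k))⁻¹) * c, ?_⟩
  rw [hc]
  have hkey : ((1 : k) - (h j : k)) * -((1 : k) - (h j : k))⁻¹ = -1 := by
    field_simp
  have expand : (X j - (h j : k) • X j) * (X i - (h i : k) • X i)
        * (C (-(1 - (h j : k))⁻¹) * c)
      = C (((1 : k) - (h j : k)) * -((1 : k) - (h j : k))⁻¹)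
        * (X j * (X i - (h i : k) • X i) * c) := by
    rw [map_mul, map_sub, map_one, map_neg]
    simp only [smul_eq_C_mul]
    ring
  rw [expand, hkey, map_neg, map_one]
  ring
end
end

section
/- Let h be a diagonal symmetry of W and let (g_{ji})_{1≤j≤i≤n} be a family in S adapted to (W,h). Then for every 1 ≤ j ≤ n one has ∑_{i=j}^n (xᵢ − hᵢxᵢ)·g_{ji} = ∇_jW − ∇_jW(h·x,y) in S. -/
noncomputable section
open MvPolynomial
open scoped Classical

variable {k : Type} [Field k] {n : ℕ}

/- STATEMENT 6: if `h` is a diagonal symmetry of `W` and `(g_{ji})` is adapted to `(W,h)`,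
then for every `1 ≤ j ≤ n`:
`∑_{i=j}^n (xᵢ − hᵢxᵢ)·g_{ji} = ∇_jW − ∇_jW(h·x,y)` in `S`. -/
theorem stmt6 (k : Type) [Field k] (n : ℕ) (W : MvPolynomial (Fin n) k)
    (h : Fin n → kˣ) (hsym : IsDiagSym h W)
    (nab : Fin n → MvPolynomial (Fin n ⊕ Fin n) k) (hnab : IsNabla W nab)
    (g : Fin n → Fin n → MvPolynomial (Fin n ⊕ Fin n) k) (hg : GAdapted h W g)
    (j : Fin n) :
    ∑ i ∈ Finset.univ.filter (fun i : Fin n => j ≤ i),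
        (Xv i - (h i : k) • Xv i) * g j i =
      nab j - substH h (nab j) := by
  classical
  have hjn : (j : ℕ) < n := j.isLt
  set Δ : ℕ → MvPolynomial (Fin n ⊕ Fin n) k :=
    fun i => Wbar h W ((j : ℕ)+1) i - Wbar h W (j : ℕ) i with hΔ
  -- `Wbar` stabilization in the second index when `h i = 1`
  have Wstep : ∀ (j' : ℕ) (i : Fin n), h i = 1 →
      Wbar h W j' ((i : ℕ)+1) = Wbar h W j' (i : ℕ) := by
    intro j' i hi1
    unfold Wbar
    refine congrArg (fun F => aeval F W) (funext fun t => ?_)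
    by_cases h1 : (t : ℕ) < j'
    · simp [h1]
    · by_cases h2 : (t : ℕ) < (i : ℕ)
      · simp [h1, h2, Nat.lt_succ_of_lt h2]
      · by_cases h3 : (t : ℕ) < (i : ℕ) + 1
        · have ht : t = i := Fin.ext (by omega)
          subst ht
          simp [h1, h2, h3, hi1]
        · simp [h1, h2, h3]
  -- generator computations for `substH`
  have hYs : ∀ t : Fin n, substH h (Yv t) = Yv t := by
    intro t; simp [substH, Yv]
  have hXs : ∀ t : Fin n, substH h (Xv t) = (h t : k) • Xv t := by
    intro t; simp [substH, Xv]
  -- nonvanishing of `Yv j - c • Xv j`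
  have hne : ∀ c : k, (Yv j : MvPolynomial (Fin n ⊕ Fin n) k) - c • Xv j ≠ 0 := by
    intro c hc
    have h2 := congrArg (coeff (Finsupp.single (Sum.inr j) 1)) hc
    simp [Yv, Xv, coeff_smul, coeff_X, coeff_X', Finsupp.single_eq_single_iff] at h2
  -- each off-diagonal summand, multiplied by `Yv j - Xv j`, telescopes
  have hD : ∀ i : Fin n, j < i →
      (Yv j - Xv j) * ((Xv i - (h i : k) • Xv i) * g j i) = Δ ((i : ℕ)+1) - Δ (i : ℕ) := by
    intro i hlt
    by_cases hi1 : h i = 1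
    · have hc : (h i : k) = 1 := by simp [hi1]
      simp [hΔ, hc, Wstep ((j : ℕ)+1) i hi1, Wstep (j : ℕ) i hi1]
    · have h1 := hg.1 j i hlt hi1
      simp only [hΔ]
      linear_combination h1
  -- the telescoping sum
  have htel : (Yv j - Xv j) * ∑ i ∈ Finset.univ.filter (fun i : Fin n => j < i),
      (Xv i - (h i : k) • Xv i) * g j i = Δ n - Δ ((j : ℕ)+1) := by
    rw [Finset.mul_sum]
    rw [Finset.sum_congr rfl fun i hi => hD i (by simpa using hi)]
    have e0 : ∀ i : Fin n, (if j < i then Δ ((i : ℕ)+1) - Δ (i : ℕ) else 0)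
        = (fun m : ℕ => if (j : ℕ) < m then Δ (m+1) - Δ m else 0) (i : ℕ) := by
      intro i
      by_cases hc : (j : ℕ) < (i : ℕ)
      · simp only [if_pos (Fin.lt_def.mpr hc), if_pos hc]
      · simp only [if_neg (fun hh => hc (Fin.lt_def.mp hh)), if_neg hc]
    rw [Finset.sum_filter, Finset.sum_congr rfl fun i _ => e0 i,
      Fin.sum_univ_eq_sum_range (fun m : ℕ => if (j : ℕ) < m then Δ (m+1) - Δ m else 0) n,
      ← Finset.sum_filter]
    have e1 : Finset.filter (fun m => (j : ℕ) < m) (Finset.range n)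
        = Finset.Ico ((j : ℕ)+1) n := by
      ext m; simp [Finset.mem_Ico]; omega
    rw [e1, Finset.sum_Ico_eq_sum_range]
    rw [Finset.sum_congr rfl fun m _ => by rw [Nat.add_assoc]]
    rw [Finset.sum_range_sub fun m => Δ ((j : ℕ)+1+m)]
    rw [Nat.add_sub_cancel' hjn, Nat.add_zero]
  -- `Δ n` is `(Yv j - Xv j) * nab j`
  have hDn : Δ n = (Yv j - Xv j) * nab j := by
    have h1 : Wbar h W ((j : ℕ)+1) n
        = aeval (fun t : Fin n => if t ≤ j then Yv t else Xv t) W := by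
      unfold Wbar
      refine congrArg (fun F => aeval F W) (funext fun t => ?_)
      have ht := t.isLt
      simp only [Fin.le_def]
      split_ifs <;> first | rfl | omega
    have h2 : Wbar h W (j : ℕ) n
        = aeval (fun t : Fin n => if t < j then Yv t else Xv t) W := by
      unfold Wbar
      refine congrArg (fun F => aeval F W) (funext fun t => ?_)
      have ht := t.isLt
      simp only [Fin.lt_def]
      split_ifs <;> first | rfl | omega
    rw [hΔ]
    simp only
    rw [h1, h2, ← hnab j]
  -- computation of `substH h (nab j)`
  have hsub : (Yv j - (h j : k) • Xv j) * substH h (nab j) =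
      Wbar h W ((j : ℕ)+1) ((j : ℕ)+1) - Wbar h W (j : ℕ) (j : ℕ) := by
    have hc := congrArg (substH h) (hnab j)
    rw [map_mul, map_sub, map_sub] at hc
    have hA : substH h (aeval (fun t : Fin n => if t ≤ j then Yv t else Xv t) W)
        = Wbar h W ((j : ℕ)+1) ((j : ℕ)+1) := by
      rw [← AlgHom.comp_apply, MvPolynomial.comp_aeval]
      unfold Wbar
      refine congrArg (fun F => aeval F W) (funext fun t => ?_)
      simp only [apply_ite (substH h), hYs, hXs, Fin.le_def]
      split_ifs <;> first | rfl | omega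
    have hB : substH h (aeval (fun t : Fin n => if t < j then Yv t else Xv t) W)
        = Wbar h W (j : ℕ) (j : ℕ) := by
      rw [← AlgHom.comp_apply, MvPolynomial.comp_aeval]
      unfold Wbar
      refine congrArg (fun F => aeval F W) (funext fun t => ?_)
      simp only [apply_ite (substH h), hYs, hXs, Fin.lt_def]
      split_ifs <;> first | rfl | omega
    rw [hYs j, hXs j, hA, hB] at hc
    exact hc
  -- split off the diagonal term
  have key : Finset.univ.filter (fun i : Fin n => j ≤ i)
      = insert j (Finset.univ.filter (fun i : Fin n => j < i)) := by
    ext i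
    simp only [Finset.mem_filter, Finset.mem_insert, Finset.mem_univ, true_and]
    constructor
    · intro hle
      rcases eq_or_lt_of_le hle with he | hl
      · exact Or.inl he.symm
      · exact Or.inr hl
    · rintro (he | hl)
      · exact le_of_eq he.symm
      · exact le_of_lt hl
  have hnotmem : j ∉ Finset.univ.filter (fun i : Fin n => j < i) := by simp
  rw [key, Finset.sum_insert hnotmem]
  -- combine telescoping with `hDn`
  have h2 : (Yv j - Xv j) * ∑ i ∈ Finset.univ.filter (fun i : Fin n => j < i),
      (Xv i - (h i : k) • Xv i) * g j i
      = (Yv j - Xv j) * nab j -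
        (Wbar h W ((j : ℕ)+1) ((j : ℕ)+1) - Wbar h W (j : ℕ) ((j : ℕ)+1)) := by
    rw [htel, hDn]
  by_cases hj1 : h j = 1
  · have c1 : (h j : k) = 1 := by simp [hj1]
    have hBB : Wbar h W (j : ℕ) ((j : ℕ)+1) = Wbar h W (j : ℕ) (j : ℕ) :=
      Wstep (j : ℕ) j hj1
    have hfac : (Yv j : MvPolynomial (Fin n ⊕ Fin n) k) - Xv j ≠ 0 := by
      have := hne 1; rwa [one_smul] at this
    apply mul_left_cancel₀ hfac
    rw [c1] at hsub ⊢
    rw [one_smul] at hsub ⊢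
    linear_combination h2 + hsub + hBB
  · have h3 := hg.2.2.1 j hj1
    have hfac : ((Yv j : MvPolynomial (Fin n ⊕ Fin n) k) - Xv j) *
        (Yv j - (h j : k) • Xv j) ≠ 0 := by
      refine mul_ne_zero ?_ (hne _)
      have := hne 1; rwa [one_smul] at this
    apply mul_left_cancel₀ hfac
    linear_combination h3 + (Yv j - (h j : k) • Xv j) * h2 + (Yv j - Xv j) * hsub
end
end

section
/- Let h be a diagonal symmetry of W, let (f_{ji})_{1≤j<i≤n} in R be adapted to (W,h), and let i be an index with hᵢ ≠ 1. Then (xᵢ − hᵢxᵢ)·( ∑_{k=1}^{i−1} (x_k − h_kx_k)·f_{ki} − ∑_{j=i+1}^{n} (x_j − h_jx_j)·f_{ij} ) = −(W̄^h_{0,i} − W̄^h_{0,i−1}) in S. -/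
noncomputable section
open MvPolynomial
open scoped Classical

variable {k : Type} [Field k] {n : ℕ}

-- AUX
lemma aeval_aeval' {σ τ υ : Type} (f : σ → MvPolynomial τ k) (g : τ → MvPolynomial υ k)
    (p : MvPolynomial σ k) :
    aeval g (aeval f p) = aeval (fun s => aeval g (f s)) p := by
  rw [← AlgHom.comp_apply, comp_aeval]

lemma hX_zero {h : Fin n → kˣ} {a : Fin n} (ha : h a = 1) :
    (X a : MvPolynomial (Fin n) k) - (h a : k) • X a = 0 := by
  rw [ha, Units.val_one, one_smul, sub_self]

lemma Wtil_succ_row (h : Fin n → kˣ) (W : MvPolynomial (Fin n) k) {a : Fin n} {m : ℕ}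
    (ha : h a = 1) (ham : (a : ℕ) < m) :
    Wtil h W ((a : ℕ)+1) m = Wtil h W (a : ℕ) m := by
  unfold Wtil
  refine congrArg (fun v => aeval v W) (funext fun t => ?_)
  rcases lt_trichotomy (t : ℕ) (a : ℕ) with h1 | h1 | h1
  · simp [h1, Nat.lt_succ_of_lt h1]
  · have : t = a := Fin.ext h1
    subst this
    simp [h1, ham, xh, ha]
  · have h2 : ¬ (t : ℕ) < (a : ℕ) + 1 := by omega
    simp [h2, Nat.lt_asymm h1]

lemma Wtil_succ_col (h : Fin n → kˣ) (W : MvPolynomial (Fin n) k) {b : Fin n} {p : ℕ}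
    (hb : h b = 1) (hpb : p ≤ (b : ℕ)) :
    Wtil h W p ((b : ℕ)+1) = Wtil h W p (b : ℕ) := by
  unfold Wtil
  refine congrArg (fun v => aeval v W) (funext fun t => ?_)
  rcases lt_trichotomy (t : ℕ) (b : ℕ) with h1 | h1 | h1
  · simp [h1, Nat.lt_succ_of_lt h1]
  · have : t = b := Fin.ext h1
    subst this
    have h2 : ¬ (t : ℕ) < p := by omega
    simp [h2, h1, hb]
  · have h2 : ¬ (t : ℕ) < (b : ℕ) + 1 := by omega
    have h3 : ¬ (t : ℕ) < p := by omega
    simp [h2, h3, Nat.lt_asymm h1]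

lemma Wtil_diag (h : Fin n → kˣ) (W : MvPolynomial (Fin n) k) (hsym : IsDiagSym h W) (j : ℕ) :
    Wtil h W j n = Wtil h W j j := by
  conv_lhs => rw [← hsym]
  unfold Wtil
  rw [aeval_aeval']
  refine congrArg (fun v => aeval v W) (funext fun t => ?_)
  rw [map_smul, aeval_X]
  by_cases h1 : (t : ℕ) < j
  · simp only [h1, if_true]
    by_cases h2 : h t = 1
    · simp [xh, h2]
    · simp [xh, h2]
  · simp [h1, t.isLt]

lemma toS_Wtil0 (h : Fin n → kˣ) (W : MvPolynomial (Fin n) k) (m : ℕ) :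
    toS (Wtil h W 0 m) = Wbar h W 0 m := by
  unfold toS Wtil Wbar
  rw [aeval_aeval']
  refine congrArg (fun v => aeval v W) (funext fun t => ?_)
  simp only [Nat.not_lt_zero, if_false]
  by_cases h1 : (t : ℕ) < m
  · simp [h1]
  · simp [h1, Xv]

lemma sum_filter_lt_eq {M : Type} [AddCommMonoid M] (i : Fin n) (G : ℕ → M) :
    ∑ a ∈ Finset.univ.filter (fun j : Fin n => j < i), G (a : ℕ)
      = ∑ m ∈ Finset.range (i : ℕ), G m := by
  have hn : 0 < n := i.pos
  refine Finset.sum_nbij' (fun a => (a : ℕ)) (fun m => ⟨m % n, Nat.mod_lt m hn⟩) ?_ ?_ ?_ ?_ ?_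
  · intro a ha
    simp only [Finset.mem_filter, Finset.mem_univ, true_and] at ha
    simpa using ha
  · intro m hm
    simp only [Finset.mem_range] at hm
    have : m % n = m := Nat.mod_eq_of_lt (lt_trans hm i.isLt)
    simp only [Finset.mem_filter, Finset.mem_univ, true_and, Fin.lt_def]
    omega
  · intro a _
    exact Fin.ext (Nat.mod_eq_of_lt a.isLt)
  · intro m hm
    simp only [Finset.mem_range] at hm
    exact Nat.mod_eq_of_lt (lt_trans hm i.isLt)
  · intro a _; rfl

lemma sum_filter_gt_eq {M : Type} [AddCommMonoid M] (i : Fin n) (G : ℕ → M) :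
    ∑ a ∈ Finset.univ.filter (fun j : Fin n => i < j), G (a : ℕ)
      = ∑ m ∈ Finset.Ico ((i : ℕ)+1) n, G m := by
  have hn : 0 < n := i.pos
  refine Finset.sum_nbij' (fun a => (a : ℕ)) (fun m => ⟨m % n, Nat.mod_lt m hn⟩) ?_ ?_ ?_ ?_ ?_
  · intro a ha
    simp only [Finset.mem_filter, Finset.mem_univ, true_and, Fin.lt_def] at ha
    simp only [Finset.mem_Ico]
    exact ⟨ha, a.isLt⟩
  · intro m hm
    simp only [Finset.mem_Ico] at hm
    have hmn : m % n = m := Nat.mod_eq_of_lt hm.2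
    simp only [Finset.mem_filter, Finset.mem_univ, true_and, Fin.lt_def]
    omega
  · intro a _
    exact Fin.ext (Nat.mod_eq_of_lt a.isLt)
  · intro m hm
    simp only [Finset.mem_Ico] at hm
    exact Nat.mod_eq_of_lt hm.2
  · intro a _; rfl

theorem stmt9R (W : MvPolynomial (Fin n) k)
    (h : Fin n → kˣ) (hsym : IsDiagSym h W)
    (f : Fin n → Fin n → MvPolynomial (Fin n) k) (hf : FAdapted h W f)
    (i : Fin n) (hi : h i ≠ 1) :
    (X i - (h i : k) • X i) *
        (∑ j ∈ Finset.univ.filter (fun j : Fin n => j < i),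
            (X j - (h j : k) • X j) * (f j i)
         - ∑ j ∈ Finset.univ.filter (fun j : Fin n => i < j),
            (X j - (h j : k) • X j) * (f i j)) =
      -(Wtil h W 0 ((i : ℕ)+1) - Wtil h W 0 (i : ℕ)) := by
  have key1 : ∀ a ∈ Finset.univ.filter (fun j : Fin n => j < i),
      (X i - (h i : k) • X i) * ((X a - (h a : k) • X a) * f a i) =
        (Wtil h W ((a : ℕ)+1) ((i : ℕ)+1) - Wtil h W (a : ℕ) ((i : ℕ)+1)) -
        (Wtil h W ((a : ℕ)+1) (i : ℕ) - Wtil h W (a : ℕ) (i : ℕ)) := by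
    intro a ha
    simp only [Finset.mem_filter, Finset.mem_univ, true_and] at ha
    by_cases h1 : h a = 1
    · have hai : (a : ℕ) < (i : ℕ) := ha
      rw [hX_zero h1, Wtil_succ_row h W h1 (Nat.lt_succ_of_lt hai), Wtil_succ_row h W h1 hai]
      ring
    · have := hf.1 a i ha h1 hi
      linear_combination this
  have key2 : ∀ b ∈ Finset.univ.filter (fun j : Fin n => i < j),
      (X i - (h i : k) • X i) * ((X b - (h b : k) • X b) * f i b) =
        (Wtil h W ((i : ℕ)+1) ((b : ℕ)+1) - Wtil h W (i : ℕ) ((b : ℕ)+1)) -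
        (Wtil h W ((i : ℕ)+1) (b : ℕ) - Wtil h W (i : ℕ) (b : ℕ)) := by
    intro b hb
    simp only [Finset.mem_filter, Finset.mem_univ, true_and] at hb
    have hib : (i : ℕ) < (b : ℕ) := hb
    by_cases h1 : h b = 1
    · rw [hX_zero h1, Wtil_succ_col h W h1 (by omega), Wtil_succ_col h W h1 (by omega)]
      ring
    · have := hf.1 i b hb hi h1
      linear_combination this
  rw [mul_sub, Finset.mul_sum, Finset.mul_sum, Finset.sum_congr rfl key1,
    Finset.sum_congr rfl key2]
  rw [sum_filter_lt_eq i (fun m =>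
      (Wtil h W (m+1) ((i : ℕ)+1) - Wtil h W m ((i : ℕ)+1)) -
      (Wtil h W (m+1) (i : ℕ) - Wtil h W m (i : ℕ)))]
  rw [sum_filter_gt_eq i (fun m =>
      (Wtil h W ((i : ℕ)+1) (m+1) - Wtil h W (i : ℕ) (m+1)) -
      (Wtil h W ((i : ℕ)+1) m - Wtil h W (i : ℕ) m))]
  have t1 : ∑ m ∈ Finset.range (i : ℕ),
      ((Wtil h W (m+1) ((i : ℕ)+1) - Wtil h W m ((i : ℕ)+1)) -
       (Wtil h W (m+1) (i : ℕ) - Wtil h W m (i : ℕ)))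
      = (Wtil h W (i : ℕ) ((i : ℕ)+1) - Wtil h W (i : ℕ) (i : ℕ)) -
        (Wtil h W 0 ((i : ℕ)+1) - Wtil h W 0 (i : ℕ)) := by
    have := Finset.sum_range_sub
      (fun m => Wtil h W m ((i : ℕ)+1) - Wtil h W m (i : ℕ)) (i : ℕ)
    rw [← this]
    apply Finset.sum_congr rfl
    intro m _
    ring
  have t2 : ∑ m ∈ Finset.Ico ((i : ℕ)+1) n,
      ((Wtil h W ((i : ℕ)+1) (m+1) - Wtil h W (i : ℕ) (m+1)) -
       (Wtil h W ((i : ℕ)+1) m - Wtil h W (i : ℕ) m))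
      = (Wtil h W ((i : ℕ)+1) n - Wtil h W (i : ℕ) n) -
        (Wtil h W ((i : ℕ)+1) ((i : ℕ)+1) - Wtil h W (i : ℕ) ((i : ℕ)+1)) := by
    have hr : ∀ N : ℕ, ∑ m ∈ Finset.range N,
        ((Wtil h W ((i : ℕ)+1) (m+1) - Wtil h W (i : ℕ) (m+1)) -
         (Wtil h W ((i : ℕ)+1) m - Wtil h W (i : ℕ) m))
        = (Wtil h W ((i : ℕ)+1) N - Wtil h W (i : ℕ) N) -
          (Wtil h W ((i : ℕ)+1) 0 - Wtil h W (i : ℕ) 0) := fun N =>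
      Finset.sum_range_sub (fun m => Wtil h W ((i : ℕ)+1) m - Wtil h W (i : ℕ) m) N
    rw [Finset.sum_Ico_eq_sub _ (Nat.succ_le_of_lt i.isLt), hr n, hr ((i : ℕ)+1)]
    abel
  rw [t1, t2, Wtil_diag h W hsym ((i : ℕ)+1), Wtil_diag h W hsym (i : ℕ)]
  ring

/- STATEMENT 9: if `h` is a diagonal symmetry of `W`, `(f_{ji})` is adapted to `(W,h)` and
`hᵢ ≠ 1`, then in `S`:
`(xᵢ − hᵢxᵢ)·( ∑_{k<i} (x_k − h_kx_k)·f_{ki} − ∑_{j>i} (x_j − h_jx_j)·f_{ij} )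
  = −(W̄^h_{0,i} − W̄^h_{0,i−1})`. -/
theorem stmt9 (k : Type) [Field k] (n : ℕ) (W : MvPolynomial (Fin n) k)
    (h : Fin n → kˣ) (hsym : IsDiagSym h W)
    (f : Fin n → Fin n → MvPolynomial (Fin n) k) (hf : FAdapted h W f)
    (i : Fin n) (hi : h i ≠ 1) :
    (Xv i - (h i : k) • Xv i) *
        (∑ j ∈ Finset.univ.filter (fun j : Fin n => j < i),
            (Xv j - (h j : k) • Xv j) * toS (f j i)
         - ∑ j ∈ Finset.univ.filter (fun j : Fin n => i < j),
            (Xv j - (h j : k) • Xv j) * toS (f i j)) =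
      -(Wbar h W 0 ((i : ℕ)+1) - Wbar h W 0 (i : ℕ)) := by
  have main := congrArg (toS : MvPolynomial (Fin n) k →ₐ[k] MvPolynomial (Fin n ⊕ Fin n) k)
    (stmt9R W h hsym f hf i hi)
  have hX : ∀ t : Fin n, toS (X t : MvPolynomial (Fin n) k) = Xv t := fun t => aeval_X _ _
  simp only [map_mul, map_sub, map_neg, map_sum, map_smul, hX, toS_Wtil0] at main
  exact main
end
end

section
/- Let h be a diagonal symmetry of W, let (g_{ji})_{1≤j≤i≤n} in S be adapted to (W,h), and let i be an index with hᵢ ≠ 1. Then (xᵢ − hᵢxᵢ)·∑_{j=1}^{i} (y_j − x_j)·g_{ji} = (xᵢ − hᵢxᵢ)·∇_iW(h·x,y) − (W̄^h_{0,i} − W̄^h_{0,i−1}) in S. -/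
noncomputable section
open MvPolynomial
open scoped Classical

variable {k : Type} [Field k] {n : ℕ}

lemma substH_Xv (h : Fin n → kˣ) (t : Fin n) :
    substH h (Xv t : MvPolynomial (Fin n ⊕ Fin n) k) = (h t : k) • Xv t := by
  simp [substH, Xv, Yv]

lemma substH_Yv (h : Fin n → kˣ) (t : Fin n) :
    substH h (Yv t : MvPolynomial (Fin n ⊕ Fin n) k) = Yv t := by
  simp [substH, Xv, Yv]

lemma YX_ne_zero (h : Fin n → kˣ) (i : Fin n) :
    (Yv i - (h i : k) • Xv i : MvPolynomial (Fin n ⊕ Fin n) k) ≠ 0 := by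
  intro h0
  have hc := congrArg (MvPolynomial.coeff (Finsupp.single (Sum.inr i) 1)) h0
  simp [Yv, Xv, MvPolynomial.coeff_smul, MvPolynomial.coeff_X',
    Finsupp.single_eq_single_iff] at hc

/- STATEMENT 10: if `h` is a diagonal symmetry of `W`, `(g_{ji})` is adapted to `(W,h)` and
`hᵢ ≠ 1`, then in `S`:
`(xᵢ − hᵢxᵢ)·∑_{j=1}^{i} (y_j − x_j)·g_{ji}
  = (xᵢ − hᵢxᵢ)·∇_iW(h·x,y) − (W̄^h_{0,i} − W̄^h_{0,i−1})`. -/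
theorem stmt10 (k : Type) [Field k] (n : ℕ) (W : MvPolynomial (Fin n) k)
    (h : Fin n → kˣ) (hsym : IsDiagSym h W)
    (nab : Fin n → MvPolynomial (Fin n ⊕ Fin n) k) (hnab : IsNabla W nab)
    (g : Fin n → Fin n → MvPolynomial (Fin n ⊕ Fin n) k) (hg : GAdapted h W g)
    (i : Fin n) (hi : h i ≠ 1) :
    (Xv i - (h i : k) • Xv i) *
        ∑ j ∈ Finset.univ.filter (fun j : Fin n => j ≤ i), (Yv j - Xv j) * g j i =
      (Xv i - (h i : k) • Xv i) * substH h (nab i) -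
        (Wbar h W 0 ((i : ℕ)+1) - Wbar h W 0 (i : ℕ)) := by
  obtain ⟨hg1, hg2, hg3, hg4⟩ := hg
  -- Step A: substH applied to the nabla relation
  have key : (Yv i - (h i : k) • Xv i) * substH h (nab i)
      = Wbar h W ((i:ℕ)+1) ((i:ℕ)+1) - Wbar h W (i:ℕ) (i:ℕ) := by
    have hc := congrArg (substH h) (hnab i)
    rw [map_mul, map_sub, substH_Xv, substH_Yv, map_sub,
      comp_aeval_apply, comp_aeval_apply] at hc
    have e1 : (fun t : Fin n => (substH h) (if t ≤ i then Yv t else Xv t))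
        = fun t : Fin n => if (t:ℕ) < (i:ℕ)+1 then Yv t
            else if (t:ℕ) < (i:ℕ)+1 then Xv t else (h t : k) • Xv t := by
      funext t
      by_cases ht : t ≤ i
      · simp [ht, substH_Yv, Nat.lt_succ_iff.mpr (Fin.le_def.mp ht)]
      · have ht' : ¬ ((t:ℕ) < (i:ℕ)+1) := by
          simpa [Nat.lt_succ_iff, ← Fin.le_def] using ht
        simp [ht, ht', substH_Xv]
    have e2 : (fun t : Fin n => (substH h) (if t < i then Yv t else Xv t))
        = fun t : Fin n => if (t:ℕ) < (i:ℕ) then Yv t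
            else if (t:ℕ) < (i:ℕ) then Xv t else (h t : k) • Xv t := by
      funext t
      by_cases ht : t < i
      · simp [ht, substH_Yv, Fin.lt_def.mp ht]
      · have ht' : ¬ ((t:ℕ) < (i:ℕ)) := by simpa [← Fin.lt_def] using ht
        simp [ht, ht', substH_Xv]
    rw [e1, e2] at hc
    exact hc
  -- Step B: the diagonal term
  have hdiag : (Xv i - (h i : k) • Xv i) * ((Yv i - Xv i) * g i i)
      = (Xv i - (h i : k) • Xv i) * substH h (nab i) -
        (Wbar h W (i:ℕ) ((i:ℕ)+1) - Wbar h W (i:ℕ) (i:ℕ)) := by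
    have h3 := hg3 i hi
    apply mul_left_cancel₀ (YX_ne_zero h i)
    linear_combination h3 - (Xv i - (h i : k) • Xv i) * key
  -- Telescoping sum over j < i
  set F : ℕ → MvPolynomial (Fin n ⊕ Fin n) k :=
    fun m => Wbar h W m ((i:ℕ)+1) - Wbar h W m (i:ℕ) with hF
  have htel : ∑ j ∈ Finset.univ.filter (fun j : Fin n => j < i),
      ((Xv i - (h i : k) • Xv i) * ((Yv j - Xv j) * g j i)) = F (i:ℕ) - F 0 := by
    rw [← Finset.sum_range_sub F (i:ℕ)]
    refine Finset.sum_nbij' (fun j : Fin n => (j:ℕ))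
      (fun m => if hm : m < n then (⟨m, hm⟩ : Fin n) else i) ?_ ?_ ?_ ?_ ?_
    · intro a ha
      simp only [Finset.mem_filter, Finset.mem_univ, true_and] at ha
      simpa [Finset.mem_range] using Fin.lt_def.mp ha
    · intro m hm
      simp only [Finset.mem_range] at hm
      have hmn : m < n := lt_trans hm i.isLt
      rw [dif_pos hmn]
      simp only [Finset.mem_filter, Finset.mem_univ, true_and, Fin.lt_def]
      exact hm
    · intro a ha
      simp [a.isLt]
    · intro m hm
      simp only [Finset.mem_range] at hm
      have hmn : m < n := lt_trans hm i.isLt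
      rw [dif_pos hmn]
    · intro j hj
      simp only [Finset.mem_filter, Finset.mem_univ, true_and] at hj
      have h1 := hg1 j i hj hi
      simp only [hF]
      linear_combination h1
  -- split off the j = i term
  have hins : Finset.univ.filter (fun j : Fin n => j ≤ i)
      = insert i (Finset.univ.filter (fun j : Fin n => j < i)) := by
    ext j
    simp [le_iff_lt_or_eq, or_comm]
  rw [hins, Finset.mul_sum, Finset.sum_insert (by simp), ← Finset.mul_sum, Finset.mul_sum,
    htel, hdiag]
  simp only [hF]
  ring
end
end

section
/- Let h be a diagonal symmetry of W, let (g_{ji})_{1≤j≤i≤n} in S be adapted to (W,h), and let i be an index with hᵢ = 1. Then ∑_{j=1}^{i} (y_j − x_j)·g_{ji} = ∇_iW(h·x,y) − ∂_{xᵢ}( W(x₁,…,xᵢ,h_{i+1}x_{i+1},…,hₙxₙ) ) in S. -/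
noncomputable section
open MvPolynomial
open scoped Classical

variable {k : Type} [Field k] {n : ℕ}

/- STATEMENT 12: if `h` is a diagonal symmetry of `W`, `(g_{ji})` is adapted to `(W,h)` and
`hᵢ = 1`, then in `S`:
`∑_{j=1}^{i} (y_j − x_j)·g_{ji} = ∇_iW(h·x,y) − ∂_{xᵢ}( W(x₁,…,xᵢ,h_{i+1}x_{i+1},…,hₙxₙ) )`.
Note `W(x₁,…,xᵢ,h_{i+1}x_{i+1},…,hₙxₙ)`, viewed in `S`, equals `Wbar h W 0 (i+1)`. -/
theorem stmt12 (k : Type) [Field k] (n : ℕ) (W : MvPolynomial (Fin n) k)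
    (h : Fin n → kˣ) (hsym : IsDiagSym h W)
    (nab : Fin n → MvPolynomial (Fin n ⊕ Fin n) k) (hnab : IsNabla W nab)
    (g : Fin n → Fin n → MvPolynomial (Fin n ⊕ Fin n) k) (hg : GAdapted h W g)
    (i : Fin n) (hi : h i = 1) :
    ∑ j ∈ Finset.univ.filter (fun j : Fin n => j ≤ i), (Yv j - Xv j) * g j i =
      substH h (nab i) - pderiv (Sum.inl i) (Wbar h W 0 ((i : ℕ)+1)) := by

  classical
  obtain ⟨hg1, hg2, hg3, hg4⟩ := hg
  have hXY : (Yv i - Xv i : MvPolynomial (Fin n ⊕ Fin n) k) ≠ 0 := by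
    rw [sub_ne_zero]
    intro hEq
    exact absurd (MvPolynomial.X_injective hEq) (by simp)
  have hY : ∀ t : Fin n, substH h (Yv t) = (Yv t : MvPolynomial (Fin n ⊕ Fin n) k) := by
    intro t; simp [substH, Yv]
  have hX : ∀ t : Fin n, substH h (Xv t) = ((h t : k) • Xv t : MvPolynomial (Fin n ⊕ Fin n) k) := by
    intro t; simp [substH, Xv]
  -- key identity: (Yᵢ - Xᵢ) * substH h (nab i) = Wbar (i+1) (i+1) - Wbar i i
  have keyA : (Yv i - Xv i) * substH h (nab i)
      = Wbar h W ((i : ℕ)+1) ((i : ℕ)+1) - Wbar h W (i : ℕ) (i : ℕ) := by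
    have h1 := congrArg (substH h) (hnab i)
    rw [map_mul, map_sub, hY i, hX i, hi] at h1
    simp only [Units.val_one, one_smul] at h1
    rw [h1, map_sub, comp_aeval_apply, comp_aeval_apply]
    have hf1 : (fun t : Fin n => substH h (if t ≤ i then Yv t else Xv t))
        = fun t : Fin n => if (t : ℕ) < (i : ℕ)+1 then Yv t
            else if (t : ℕ) < (i : ℕ)+1 then Xv t else (h t : k) • Xv t := by
      funext t
      rw [apply_ite (substH h), hY t, hX t]
      have hiff : t ≤ i ↔ (t : ℕ) < (i : ℕ)+1 := by
        rw [Nat.lt_succ_iff, Fin.le_def]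
      by_cases ht : (t : ℕ) < (i : ℕ)+1
      · simp [hiff.mpr ht, ht]
      · simp [hiff.not.mpr ht, ht]
    have hf2 : (fun t : Fin n => substH h (if t < i then Yv t else Xv t))
        = fun t : Fin n => if (t : ℕ) < (i : ℕ) then Yv t
            else if (t : ℕ) < (i : ℕ) then Xv t else (h t : k) • Xv t := by
      funext t
      rw [apply_ite (substH h), hY t, hX t]
      have hiff : t < i ↔ (t : ℕ) < (i : ℕ) := Fin.lt_def
      by_cases ht : (t : ℕ) < (i : ℕ)
      · simp [hiff.mpr ht, ht]
      · simp [hiff.not.mpr ht, ht]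
    rw [Wbar, Wbar, hf1, hf2]
  -- split the sum at j = i
  have hsplit : (Finset.univ.filter (fun j : Fin n => j ≤ i))
      = insert i (Finset.univ.filter (fun j : Fin n => j < i)) := by
    ext t
    simp [le_iff_lt_or_eq, or_comm]
  apply mul_left_cancel₀ hXY
  rw [hsplit, Finset.sum_insert (by simp), mul_add, ← mul_assoc, ← sq, hg4 i hi,
    Finset.mul_sum]
  -- telescope the remaining sum
  have htel : ∑ j ∈ Finset.univ.filter (fun j : Fin n => j < i),
      (Yv i - Xv i) * ((Yv j - Xv j) * g j i)
      = (Yv i - Xv i) * (pderiv (Sum.inl i) (Wbar h W (i : ℕ) ((i : ℕ)+1))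
          - pderiv (Sum.inl i) (Wbar h W 0 ((i : ℕ)+1))) := by
    rw [← Finset.mul_sum]
    congr 1
    have hstep : ∀ j ∈ Finset.univ.filter (fun j : Fin n => j < i),
        (Yv j - Xv j) * g j i
          = pderiv (Sum.inl i) (Wbar h W ((j : ℕ)+1) ((i : ℕ)+1))
            - pderiv (Sum.inl i) (Wbar h W (j : ℕ) ((i : ℕ)+1)) := by
      intro j hj
      exact hg2 j i (by simpa using hj) hi
    rw [Finset.sum_congr rfl hstep]
    have hre : ∑ j ∈ Finset.univ.filter (fun j : Fin n => j < i),
        (pderiv (Sum.inl i) (Wbar h W ((j : ℕ)+1) ((i : ℕ)+1))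
          - pderiv (Sum.inl i) (Wbar h W (j : ℕ) ((i : ℕ)+1)))
        = ∑ m ∈ Finset.range (i : ℕ),
            (pderiv (Sum.inl i) (Wbar h W (m+1) ((i : ℕ)+1))
              - pderiv (Sum.inl i) (Wbar h W m ((i : ℕ)+1))) := by
      refine Finset.sum_nbij' (fun j : Fin n => (j : ℕ))
        (fun m => if hm : m < n then (⟨m, hm⟩ : Fin n) else i) ?_ ?_ ?_ ?_ ?_
      · intro a ha
        simp only [Finset.mem_filter, Finset.mem_univ, true_and] at ha
        simpa [Finset.mem_range] using (Fin.lt_def.mp ha)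
      · intro m hm
        simp only [Finset.mem_range] at hm
        have hmn : m < n := lt_trans hm i.isLt
        simp only [Finset.mem_filter, Finset.mem_univ, true_and, dif_pos hmn]
        exact Fin.lt_def.mpr hm
      · intro a ha
        simp [a.isLt]
      · intro m hm
        simp only [Finset.mem_range] at hm
        have hmn : m < n := lt_trans hm i.isLt
        simp [hmn]
      · intro a ha
        rfl
    rw [hre, Finset.sum_range_sub (fun m => pderiv (Sum.inl i) (Wbar h W m ((i : ℕ)+1)))]
  rw [htel]
  linear_combination -keyA
end
end

section
/- Let A = ℂ[x₁,x₂,x₃]/(2x₁+x₂x₃, 2x₂+x₁x₃, x₁x₂), and let σ be the ℂ-algebra automorphism of A induced by x₁ ↦ −x₁, x₂ ↦ −x₂, x₃ ↦ x₃ (which is well defined since the ideal is stable under this substitution). Then the fixed-point subalgebra A^σ = {a ∈ A : σ(a) = a} is isomorphic as a ℂ-algebra to the polynomial ring ℂ[t], via t ↦ (class of x₃). -/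
noncomputable section
open MvPolynomial

/-- The Jacobian ideal `(2x₁+x₂x₃, 2x₂+x₁x₃, x₁x₂)` of `W = x₁²+x₂²+x₁x₂x₃` in
`ℂ[x₁,x₂,x₃]` (variables `X 0, X 1, X 2`). -/
def jacIdeal : Ideal (MvPolynomial (Fin 3) ℂ) :=
  Ideal.span {2 * X 0 + X 1 * X 2, 2 * X 1 + X 0 * X 2, X 0 * X 1}

/-!
In `A` the relations give `x₁² = x₂² = x₁x₂ = 0`, `x₃x₁ = -2x₂` and `x₃x₂ = -2x₁`, so the
`ℂ`-span `N` of `x₁, x₂` is an ideal and `A = ℂ[x₃] + N`. The automorphism `σ` is the identity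
on `ℂ[x₃]` and `-1` on `N`, so, `2` being invertible, a fixed element has no `N`-component.
Finally `t ↦ x₃` is injective: sending `x₁, x₂ ↦ 0`, `x₃ ↦ t` gives a left inverse `A → ℂ[t]`.
-/

theorem MvPolynomial.quotient_induction {R σ : Type*} [CommRing R] {I : Ideal (MvPolynomial σ R)}
    {P : MvPolynomial σ R ⧸ I → Prop} (algebraMap : ∀ r : R, P (algebraMap R _ r))
    (add : ∀ a b, P a → P b → P (a + b))
    (mul_X : ∀ a i, P a → P (a * Ideal.Quotient.mk I (X i))) (a : MvPolynomial σ R ⧸ I) :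
    P a := by
  obtain ⟨p, rfl⟩ := Ideal.Quotient.mk_surjective a
  induction p using MvPolynomial.induction_on with
  | C r => exact algebraMap r
  | add p q hp hq => simpa only [map_add] using add _ _ hp hq
  | mul_X p i hp => simpa only [map_mul] using mul_X _ i hp

theorem Submodule.mem_of_apply_eq_self_of_sup_eq_top {R M : Type*} [Semiring R] [AddCommGroup M]
    [Module R M] [IsAddTorsionFree M] {f : M →ₗ[R] M} {P N : Submodule R M} (hPN : P ⊔ N = ⊤)
    (hP : ∀ p ∈ P, f p = p) (hN : ∀ n ∈ N, f n = -n) {m : M} (hm : f m = m) : m ∈ P := by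
  obtain ⟨p, hp, n, hn, rfl⟩ := Submodule.mem_sup.mp (hPN ▸ Submodule.mem_top : m ∈ P ⊔ N)
  rw [map_add, hP p hp, hN n hn, add_right_inj, eq_comm, self_eq_neg] at hm
  simpa [hm] using hp

namespace JacobianQuotient

local notation "𝒜" => MvPolynomial (Fin 3) ℂ ⧸ jacIdeal

abbrev x (i : Fin 3) : 𝒜 := Ideal.Quotient.mk jacIdeal (X i)

instance : IsAddTorsionFree 𝒜 := .of_module_rat _

theorem mk_eq_zero_of_mem_generators {p : MvPolynomial (Fin 3) ℂ}
    (hp : p ∈ ({2 * X 0 + X 1 * X 2, 2 * X 1 + X 0 * X 2, X 0 * X 1} : Set _)) :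
    Ideal.Quotient.mk jacIdeal p = 0 :=
  Ideal.Quotient.eq_zero_iff_mem.mpr (Ideal.subset_span hp)

theorem two_mul_x0_add_x1_mul_x2 : 2 * x 0 + x 1 * x 2 = 0 := by
  simpa [map_ofNat] using mk_eq_zero_of_mem_generators (Set.mem_insert _ _)

theorem two_mul_x1_add_x0_mul_x2 : 2 * x 1 + x 0 * x 2 = 0 := by
  simpa [map_ofNat] using
    mk_eq_zero_of_mem_generators (Set.mem_insert_of_mem _ (Set.mem_insert _ _))

theorem x0_mul_x1 : x 0 * x 1 = 0 := by
  simpa using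
    mk_eq_zero_of_mem_generators (Set.mem_insert_of_mem _ (Set.mem_insert_of_mem _ rfl))

theorem x0_mul_x0 : x 0 * x 0 = 0 := by
  rw [← two_nsmul_eq_zero, two_nsmul, ← two_mul]
  linear_combination x 0 * two_mul_x0_add_x1_mul_x2 - x 2 * x0_mul_x1

theorem x1_mul_x1 : x 1 * x 1 = 0 := by
  rw [← two_nsmul_eq_zero, two_nsmul, ← two_mul]
  linear_combination x 1 * two_mul_x1_add_x0_mul_x2 - x 2 * x0_mul_x1

def aevalX2 : Polynomial ℂ →ₐ[ℂ] 𝒜 := Polynomial.aeval (x 2)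

def oddPart : Submodule ℂ 𝒜 := Submodule.span ℂ {x 0, x 1}

theorem x0_mem_oddPart : x 0 ∈ oddPart := Submodule.subset_span (Set.mem_insert _ _)

theorem x1_mem_oddPart : x 1 ∈ oddPart := Submodule.subset_span (Set.mem_insert_of_mem _ rfl)

theorem x_mul_mem_oddPart (i : Fin 3) {n : 𝒜} (hn : n ∈ oddPart) : x i * n ∈ oddPart := by
  suffices x i * x 0 ∈ oddPart ∧ x i * x 1 ∈ oddPart from
    Submodule.span_le (p := oddPart.comap (LinearMap.mulLeft ℂ (x i))).mpr
      (by simpa [Set.insert_subset_iff] using this) hn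
  fin_cases i
  · simp [x0_mul_x0, x0_mul_x1]
  · simp [mul_comm (x 1), x0_mul_x1, x1_mul_x1]
  · have h20 : x 2 * x 0 = (-2 : ℂ) • x 1 := by
      simp only [neg_smul, ofNat_smul_eq_nsmul, two_nsmul]
      linear_combination two_mul_x1_add_x0_mul_x2
    have h21 : x 2 * x 1 = (-2 : ℂ) • x 0 := by
      simp only [neg_smul, ofNat_smul_eq_nsmul, two_nsmul]
      linear_combination two_mul_x0_add_x1_mul_x2
    exact ⟨h20 ▸ oddPart.smul_mem _ x1_mem_oddPart, h21 ▸ oddPart.smul_mem _ x0_mem_oddPart⟩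

theorem mul_mem_oddPart (a : 𝒜) {n : 𝒜} (hn : n ∈ oddPart) : a * n ∈ oddPart := by
  induction a using MvPolynomial.quotient_induction generalizing n with
  | algebraMap c => simpa only [← Algebra.smul_def] using oddPart.smul_mem c hn
  | add a b ha hb => simpa only [add_mul] using add_mem (ha hn) (hb hn)
  | mul_X a i ha => simpa only [mul_assoc] using ha (x_mul_mem_oddPart i hn)

theorem range_aevalX2_sup_oddPart :
    Subalgebra.toSubmodule aevalX2.range ⊔ oddPart = ⊤ := by
  have hx2 : x 2 ∈ aevalX2.range := ⟨Polynomial.X, Polynomial.aeval_X _⟩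
  refine Submodule.eq_top_iff'.mpr fun a => ?_
  induction a using MvPolynomial.quotient_induction with
  | algebraMap c => exact Submodule.mem_sup_left (Subalgebra.algebraMap_mem _ c)
  | add a b ha hb => exact add_mem ha hb
  | mul_X a i ha =>
    obtain ⟨r, hr, n, hn, rfl⟩ := Submodule.mem_sup.mp ha
    fin_cases i
    · exact Submodule.mem_sup_right (mul_mem_oddPart _ x0_mem_oddPart)
    · exact Submodule.mem_sup_right (mul_mem_oddPart _ x1_mem_oddPart)
    · rw [add_mul, mul_comm n]
      exact add_mem (Submodule.mem_sup_left (Subalgebra.mul_mem _ hr hx2))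
        (Submodule.mem_sup_right (x_mul_mem_oddPart 2 hn))

theorem aeval_eq_zero_of_mem_jacIdeal {p : MvPolynomial (Fin 3) ℂ} (hp : p ∈ jacIdeal) :
    aeval ![(0 : Polynomial ℂ), 0, Polynomial.X] p = 0 :=
  (Ideal.span_le (I := RingHom.ker (aeval ![(0 : Polynomial ℂ), 0, Polynomial.X]))).mpr
    (by simp [Set.insert_subset_iff]) hp

def specializeX2 : 𝒜 →ₐ[ℂ] Polynomial ℂ :=
  Ideal.Quotient.liftₐ jacIdeal (aeval ![0, 0, Polynomial.X]) fun _ =>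
    aeval_eq_zero_of_mem_jacIdeal

theorem specializeX2_comp_aevalX2 : specializeX2.comp aevalX2 = AlgHom.id ℂ _ :=
  Polynomial.algHom_ext <| by
    rw [AlgHom.comp_apply, aevalX2, Polynomial.aeval_X]
    exact (AlgHom.congr_fun (Ideal.Quotient.liftₐ_comp jacIdeal _
      fun _ => aeval_eq_zero_of_mem_jacIdeal) (X 2)).trans (by simp)

theorem aevalX2_injective : Function.Injective aevalX2 :=
  Function.LeftInverse.injective (g := specializeX2) (AlgHom.congr_fun specializeX2_comp_aevalX2)

theorem equalizer_eq_range_aevalX2 (σ : 𝒜 ≃ₐ[ℂ] 𝒜) (hσ0 : σ (x 0) = -x 0) (hσ1 : σ (x 1) = -x 1)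
    (hσ2 : σ (x 2) = x 2) :
    AlgHom.equalizer (σ : 𝒜 →ₐ[ℂ] 𝒜) (AlgHom.id ℂ 𝒜) = aevalX2.range := by
  have h_range : ∀ a ∈ Subalgebra.toSubmodule aevalX2.range, σ a = a := by
    rintro _ ⟨q, rfl⟩
    exact AlgHom.congr_fun (Polynomial.algHom_ext (f := (σ : 𝒜 →ₐ[ℂ] 𝒜).comp aevalX2)
      (g := aevalX2) (by simpa [aevalX2] using hσ2)) q
  have h_odd : ∀ n ∈ oddPart, σ n = -n := fun n hn =>
    (Submodule.span_le (p := LinearMap.eqLocus σ.toLinearMap (-LinearMap.id))).mpr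
      (by simp [Set.insert_subset_iff, hσ0, hσ1]) hn
  refine le_antisymm (fun a ha => ?_) fun a ha => h_range a ha
  exact Submodule.mem_of_apply_eq_self_of_sup_eq_top (f := σ.toLinearMap)
    range_aevalX2_sup_oddPart h_range h_odd ha

end JacobianQuotient

open JacobianQuotient in
theorem stmt15
    (σ : (MvPolynomial (Fin 3) ℂ ⧸ jacIdeal) ≃ₐ[ℂ] (MvPolynomial (Fin 3) ℂ ⧸ jacIdeal))
    (hσ1 : σ (Ideal.Quotient.mk jacIdeal (X 0)) = - Ideal.Quotient.mk jacIdeal (X 0))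
    (hσ2 : σ (Ideal.Quotient.mk jacIdeal (X 1)) = - Ideal.Quotient.mk jacIdeal (X 1))
    (hσ3 : σ (Ideal.Quotient.mk jacIdeal (X 2)) = Ideal.Quotient.mk jacIdeal (X 2)) :
    ∃ e : Polynomial ℂ ≃ₐ[ℂ]
        (AlgHom.equalizer (σ : (MvPolynomial (Fin 3) ℂ ⧸ jacIdeal) →ₐ[ℂ] _)
          (AlgHom.id ℂ (MvPolynomial (Fin 3) ℂ ⧸ jacIdeal))),
      (e Polynomial.X : MvPolynomial (Fin 3) ℂ ⧸ jacIdeal) =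
        Ideal.Quotient.mk jacIdeal (X 2) :=
  ⟨(AlgEquiv.ofInjective aevalX2 aevalX2_injective).trans
      (Subalgebra.equivOfEq _ _ (equalizer_eq_range_aevalX2 σ hσ1 hσ2 hσ3).symm),
    Polynomial.aeval_X _⟩
end
end
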